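/- Let N ≥ 1 be a natural number, let K ≥ 2 be a natural number, and for each j ∈ Fin N let k'_j ∈ Fin K and p_j : Fin K → ℝ satisfy p_j(k) > 0 for all k, ∑ₖ p_j(k) = 1, and p_j(k'_j) < 1. Set μ_j = (1 − p_j(k'_j))/(K−1), δ_j(k) = p_j(k) − μ_j for k ≠ k'_j, and v_j = (1/(K−1))·∑_{k≠k'_j} δ_j(k)². Assume there exists ρ ∈ (0,1) with |δ_j(k)| ≤ ρ·μ_j for all j and all k ≠ k'_j. Then | (1/N)·∑_j (−log p_j(k'_j) − μ_j·∑_{k≠k'_j} log p_j(k)) − (1/N)·∑_j (−log p_j(k'_j) − (1−p_j(k'_j))·log μ_j + ((K−1)²/(2·(1−p_j(k'_j))))·v_j) | ≤ (1/N)·∑_j (K−1)^{3/2}·v_j^{3/2} / (3·(1−ρ)³·μ_j²). -/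

import Mathlib

/-!
Writing `p k = μ (1 + t_k)` for the residual classes, the constraint `∑ p = 1` forces `∑ t_k = 0`,
so expanding `log (1 + t) = t - t² / 2 + R(t)` turns the smoothed cross-entropy into the
decomposition plus `-μ ∑ R(t_k)`: the linear terms cancel and the quadratic ones give the
variance term. The power series of the logarithm gives `|R(t)| ≤ |t|³ / (3 (1 - |t|))`, and
`∑ |δ_k|³ ≤ (∑ δ_k²)^{3/2}` converts the cubic sum into `((K - 1) v)^{3/2}`. The batch bound is
the average of the per-sample ones by the triangle inequality.
-/

open Finset

noncomputable def logOneAddRemainder (x : ℝ) : ℝ := Real.log (1 + x) - x + x ^ 2 / 2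

theorem hasSum_logOneAddRemainder {x : ℝ} (hx : |x| < 1) :
    HasSum (fun n : ℕ => -((-x) ^ (n + 3) / (n + 3))) (logOneAddRemainder x) := by
  have hlog := Real.hasSum_pow_div_log_of_abs_lt_one (x := -x) (by rwa [abs_neg])
  have htail := ((hasSum_nat_add_iff' 2).mpr hlog).neg
  have hval : -(-Real.log (1 - -x) - ∑ i ∈ range 2, (-x) ^ (i + 1) / (i + 1)) =
      logOneAddRemainder x := by
    rw [sum_range_succ, sum_range_one, sub_neg_eq_add, logOneAddRemainder]
    push_cast
    ring
  have hterm : (fun n : ℕ => -((-x) ^ (n + 2 + 1) / ((n + 2 : ℕ) + 1 : ℝ))) =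
      fun n : ℕ => -((-x) ^ (n + 3) / (n + 3)) := by
    funext n
    push_cast
    ring
  rwa [hval, hterm] at htail

theorem abs_logOneAddRemainder_le {x : ℝ} (hx : |x| < 1) :
    |logOneAddRemainder x| ≤ |x| ^ 3 / (3 * (1 - |x|)) := by
  have hgeom : HasSum (fun n : ℕ => |x| ^ 3 / 3 * |x| ^ n) (|x| ^ 3 / 3 * (1 - |x|)⁻¹) :=
    (hasSum_geometric_of_lt_one (abs_nonneg x) hx).mul_left _
  have hterm (n : ℕ) : ‖-((-x) ^ (n + 3) / (n + 3))‖ ≤ |x| ^ 3 / 3 * |x| ^ n := by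
    have h3 : (3 : ℝ) ≤ n + 3 := by linarith [n.cast_nonneg (α := ℝ)]
    rw [norm_neg, Real.norm_eq_abs, abs_div, abs_pow, abs_neg,
      abs_of_pos (by linarith : (0 : ℝ) < n + 3), pow_add, mul_comm, div_mul_eq_mul_div]
    gcongr
  have h1 : 0 < 1 - |x| := by linarith
  calc |logOneAddRemainder x| ≤ |x| ^ 3 / 3 * (1 - |x|)⁻¹ :=
        (hasSum_logOneAddRemainder hx).norm_le_of_bounded hgeom hterm
    _ = |x| ^ 3 / (3 * (1 - |x|)) := by field_simp

theorem Finset.sum_abs_pow_three_le_rpow {ι : Type*} (s : Finset ι) (f : ι → ℝ) :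
    ∑ i ∈ s, |f i| ^ 3 ≤ (∑ i ∈ s, f i ^ 2) ^ ((3 : ℝ) / 2) := by
  set S := ∑ i ∈ s, f i ^ 2
  have hS : 0 ≤ S := sum_nonneg fun i _ => sq_nonneg (f i)
  have h32 : S ^ ((3 : ℝ) / 2) = S * √S := by
    rw [show (3 : ℝ) / 2 = 1 + 1 / 2 by norm_num, Real.rpow_add' hS (by norm_num), Real.rpow_one,
      Real.sqrt_eq_rpow]
  calc ∑ i ∈ s, |f i| ^ 3 = ∑ i ∈ s, f i ^ 2 * √(f i ^ 2) := by
        refine sum_congr rfl fun i _ => ?_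
        rw [Real.sqrt_sq_eq_abs, ← sq_abs]
        ring
    _ ≤ ∑ i ∈ s, f i ^ 2 * √S := by
        gcongr with i hi
        exact single_le_sum (fun j _ => sq_nonneg (f j)) hi
    _ = S ^ ((3 : ℝ) / 2) := by rw [← sum_mul, h32]

section Decomposition

variable {ι : Type*} (s : Finset ι) {μ : ℝ}

theorem mul_log_eq_mul_log_add_logOneAddRemainder {a : ℝ} (hμ : 0 < μ) (ha : 0 < a) :
    μ * Real.log a = μ * Real.log μ + (a - μ) - (a - μ) ^ 2 / (2 * μ) +
      μ * logOneAddRemainder ((a - μ) / μ) := by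
  have hlog : Real.log (1 + (a - μ) / μ) = Real.log a - Real.log μ := by
    rw [← Real.log_div ha.ne' hμ.ne']
    congr 1
    field_simp
    ring
  rw [logOneAddRemainder, hlog]
  field_simp
  ring

theorem mul_sum_log_eq {p : ι → ℝ} (hμ : 0 < μ) (hp : ∀ i ∈ s, 0 < p i)
    (hmean : ∑ i ∈ s, (p i - μ) = 0) :
    μ * ∑ i ∈ s, Real.log (p i) = #s * μ * Real.log μ - (∑ i ∈ s, (p i - μ) ^ 2) / (2 * μ) +
      μ * ∑ i ∈ s, logOneAddRemainder ((p i - μ) / μ) := by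
  rw [mul_sum, sum_congr rfl fun i hi => mul_log_eq_mul_log_add_logOneAddRemainder hμ (hp i hi)]
  simp only [sum_add_distrib, sum_sub_distrib, hmean, sum_const, nsmul_eq_mul, ← sum_div,
    ← mul_sum]
  ring

theorem abs_mul_sum_logOneAddRemainder_le {δ : ι → ℝ} {ρ : ℝ} (hμ : 0 < μ) (hρ : ρ < 1)
    (hδ : ∀ i ∈ s, |δ i| ≤ ρ * μ) :
    |μ * ∑ i ∈ s, logOneAddRemainder (δ i / μ)| ≤
      (∑ i ∈ s, |δ i| ^ 3) / (3 * (1 - ρ) * μ ^ 2) := by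
  have hterm (i) (hi : i ∈ s) :
      μ * |logOneAddRemainder (δ i / μ)| ≤ |δ i| ^ 3 / (3 * (1 - ρ) * μ ^ 2) := by
    have hδμ : |δ i / μ| ≤ ρ := by
      rw [abs_div, abs_of_pos hμ, div_le_iff₀ hμ]
      exact hδ i hi
    have h1 : 0 < 1 - ρ := by linarith
    calc μ * |logOneAddRemainder (δ i / μ)| ≤ μ * (|δ i / μ| ^ 3 / (3 * (1 - ρ))) := by
          gcongr
          exact (abs_logOneAddRemainder_le (hδμ.trans_lt hρ)).trans (by gcongr)
      _ = |δ i| ^ 3 / (3 * (1 - ρ) * μ ^ 2) := by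
          rw [abs_div, abs_of_pos hμ]
          field_simp
  calc |μ * ∑ i ∈ s, logOneAddRemainder (δ i / μ)|
      ≤ μ * ∑ i ∈ s, |logOneAddRemainder (δ i / μ)| := by
        rw [abs_mul, abs_of_pos hμ]
        gcongr
        exact abs_sum_le_sum_abs _ _
    _ ≤ (∑ i ∈ s, |δ i| ^ 3) / (3 * (1 - ρ) * μ ^ 2) := by
        rw [mul_sum, sum_div]
        exact sum_le_sum hterm

end Decomposition

theorem abs_smoothedCE_sub_decomposition_le (K : ℕ) (hK : 2 ≤ K) (k' : Fin K) (p : Fin K → ℝ)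
    (hp : ∀ k, 0 < p k) (hsum : ∑ k, p k = 1) (hlt : p k' < 1)
    {ρ : ℝ} (hρ0 : 0 ≤ ρ) (hρ1 : ρ < 1)
    (μ : ℝ) (hμ : μ = (1 - p k') / ((K : ℝ) - 1))
    (δ : Fin K → ℝ) (hδ : ∀ k, δ k = p k - μ)
    (v : ℝ) (hv : v = (1 / ((K : ℝ) - 1)) * ∑ k ∈ univ.erase k', δ k ^ 2)
    (hb : ∀ k ∈ univ.erase k', |δ k| ≤ ρ * μ) :
    |(-Real.log (p k') - μ * ∑ k ∈ univ.erase k', Real.log (p k)) -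
      (-Real.log (p k') - (1 - p k') * Real.log μ +
        (((K : ℝ) - 1) ^ 2 / (2 * (1 - p k'))) * v)| ≤
      ((K : ℝ) - 1) ^ ((3 : ℝ) / 2) * v ^ ((3 : ℝ) / 2) / (3 * (1 - ρ) ^ 3 * μ ^ 2) := by
  obtain rfl : δ = fun k => p k - μ := funext hδ
  subst hv
  have hK1 : (0 : ℝ) < K - 1 := by
    have : (2 : ℝ) ≤ K := by exact_mod_cast hK
    linarith
  have hμpos : 0 < μ := by
    rw [hμ]
    exact div_pos (by linarith) hK1
  have hKμ : ((K : ℝ) - 1) * μ = 1 - p k' := by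
    rw [hμ]
    field_simp
  have hcard : (#(univ.erase k') : ℝ) = K - 1 := by
    rw [card_erase_of_mem (mem_univ _), card_univ, Fintype.card_fin, Nat.cast_pred (by omega)]
  have hmean : ∑ k ∈ univ.erase k', (p k - μ) = 0 := by
    rw [sum_sub_distrib, sum_erase_eq_sub (mem_univ _), hsum, sum_const, nsmul_eq_mul, hcard, hKμ,
      sub_self]
  have hremainder : (-Real.log (p k') - μ * ∑ k ∈ univ.erase k', Real.log (p k)) -
      (-Real.log (p k') - (1 - p k') * Real.log μ + (((K : ℝ) - 1) ^ 2 / (2 * (1 - p k'))) *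
        ((1 / ((K : ℝ) - 1)) * ∑ k ∈ univ.erase k', (p k - μ) ^ 2)) =
      -(μ * ∑ k ∈ univ.erase k', logOneAddRemainder ((p k - μ) / μ)) := by
    rw [mul_sum_log_eq _ hμpos (fun k _ => hp k) hmean, hcard, ← hKμ]
    field_simp
    ring
  have hρ3 : (1 - ρ) ^ 3 ≤ 1 - ρ := pow_le_of_le_one (by linarith) (by linarith) (by norm_num)
  rw [hremainder, abs_neg, ← Real.mul_rpow hK1.le (by positivity), ← mul_assoc,
    mul_one_div_cancel hK1.ne', one_mul]
  calc _ ≤ (∑ k ∈ univ.erase k', |p k - μ| ^ 3) / (3 * (1 - ρ) * μ ^ 2) :=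
        abs_mul_sum_logOneAddRemainder_le _ hμpos hρ1 hb
    _ ≤ _ := by
        gcongr
        exact sum_abs_pow_three_le_rpow _ _

theorem batch_ce_decomposition_general (N : ℕ) (K : ℕ) (hK : 2 ≤ K)
    (k' : Fin N → Fin K) (p : Fin N → Fin K → ℝ)
    (hp : ∀ j k, 0 < p j k) (hsum : ∀ j, ∑ k, p j k = 1)
    (hlt : ∀ j, p j (k' j) < 1)
    (ρ : ℝ) (hρ : ρ ∈ Set.Ioo (0 : ℝ) 1)
    (μ : Fin N → ℝ) (hμ : ∀ j, μ j = (1 - p j (k' j)) / ((K : ℝ) - 1))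
    (δ : Fin N → Fin K → ℝ) (hδ : ∀ j k, δ j k = p j k - μ j)
    (v : Fin N → ℝ)
    (hv : ∀ j, v j = (1 / ((K : ℝ) - 1)) * ∑ k ∈ Finset.univ.erase (k' j), δ j k ^ 2)
    (hbound : ∀ j, ∀ k ∈ Finset.univ.erase (k' j), |δ j k| ≤ ρ * μ j) :
    |(1 / (N : ℝ)) * ∑ j,
        (-Real.log (p j (k' j)) - μ j * ∑ k ∈ Finset.univ.erase (k' j), Real.log (p j k)) -
      (1 / (N : ℝ)) * ∑ j,
        (-Real.log (p j (k' j)) - (1 - p j (k' j)) * Real.log (μ j) +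
          (((K : ℝ) - 1) ^ 2 / (2 * (1 - p j (k' j)))) * v j)| ≤
      (1 / (N : ℝ)) * ∑ j,
        ((K : ℝ) - 1) ^ ((3 : ℝ) / 2) * v j ^ ((3 : ℝ) / 2) /
          (3 * (1 - ρ) ^ 3 * μ j ^ 2) := by
  rw [← mul_sub, ← sum_sub_distrib, abs_mul, abs_of_nonneg (by positivity : (0 : ℝ) ≤ 1 / N)]
  gcongr
  refine (abs_sum_le_sum_abs _ _).trans (sum_le_sum fun j _ => ?_)
  exact abs_smoothedCE_sub_decomposition_le K hK (k' j) (p j) (hp j) (hsum j) (hlt j)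
    hρ.1.le hρ.2 (μ j) (hμ j) (δ j) (hδ j) (v j) (hv j) (hbound j)

/-- Batch-level decomposition: with adaptive smoothing `ε = μ_j` for each sample `j`,
the batch cross-entropy equals the batch decomposition up to a remainder bounded by
the average of the per-sample remainder bounds. -/
theorem batch_ce_decomposition (N : ℕ) (hN : 1 ≤ N) (K : ℕ) (hK : 2 ≤ K)
    (k' : Fin N → Fin K) (p : Fin N → Fin K → ℝ)
    (hp : ∀ j k, 0 < p j k) (hsum : ∀ j, ∑ k, p j k = 1)
    (hlt : ∀ j, p j (k' j) < 1)
    (ρ : ℝ) (hρ : ρ ∈ Set.Ioo (0 : ℝ) 1)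
    (μ : Fin N → ℝ) (hμ : ∀ j, μ j = (1 - p j (k' j)) / ((K : ℝ) - 1))
    (δ : Fin N → Fin K → ℝ) (hδ : ∀ j k, δ j k = p j k - μ j)
    (v : Fin N → ℝ)
    (hv : ∀ j, v j = (1 / ((K : ℝ) - 1)) * ∑ k ∈ Finset.univ.erase (k' j), δ j k ^ 2)
    (hbound : ∀ j, ∀ k ∈ Finset.univ.erase (k' j), |δ j k| ≤ ρ * μ j) :
    |(1 / (N : ℝ)) * ∑ j,
        (-Real.log (p j (k' j)) - μ j * ∑ k ∈ Finset.univ.erase (k' j), Real.log (p j k)) -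
      (1 / (N : ℝ)) * ∑ j,
        (-Real.log (p j (k' j)) - (1 - p j (k' j)) * Real.log (μ j) +
          (((K : ℝ) - 1) ^ 2 / (2 * (1 - p j (k' j)))) * v j)| ≤
      (1 / (N : ℝ)) * ∑ j,
        ((K : ℝ) - 1) ^ ((3 : ℝ) / 2) * v j ^ ((3 : ℝ) / 2) /
          (3 * (1 - ρ) ^ 3 * μ j ^ 2) :=
  batch_ce_decomposition_general N K hK k' p hp hsum hlt ρ hρ μ hμ δ hδ v hv hbound
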